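/- arXiv:2108.00414 — 5 statements merged into one kernel-verified Lean document; each statement's English description precedes it below -/
import Mathlib

section
/- If I is an ideal of a commutative Noetherian ring R with grade(I, R) ≥ 2 (i.e., I contains a regular sequence of length 2 on R), then I is a trace ideal, i.e., I = tr_R(I). -/
open Pointwise

/-- The trace ideal of an `R`-module `M`. -/
def traceIdeal (R : Type*) [CommRing R] (M : Type*) [AddCommGroup M] [Module R M] : Ideal R :=
  ⨆ f : M →ₗ[R] R, LinearMap.range f

/-- If an ideal `I` of a commutative Noetherian ring `R` contains a regular sequence of
length `2` on `R` (i.e. `grade(I, R) ≥ 2`), then `I` is a trace ideal: `I = tr_R(I)`. -/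
theorem traceIdeal_eq_self_of_grade_ge_two (R : Type*) [CommRing R] [IsNoetherianRing R]
    (I : Ideal R) (x y : R) (hx : x ∈ I) (hy : y ∈ I)
    (hreg : RingTheory.Sequence.IsRegular R [x, y]) :
    traceIdeal R I = I := by
  obtain ⟨hxreg, hyreg⟩ :=
    (RingTheory.Sequence.isWeaklyRegular_cons_iff R x [y]).mp hreg.toIsWeaklyRegular
  obtain ⟨hyreg, -⟩ :=
    (RingTheory.Sequence.isWeaklyRegular_cons_iff (QuotSMulTop x R) y []).mp hyreg
  apply le_antisymm
  · apply iSup_le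
    intro f
    rintro _ ⟨a, rfl⟩
    -- key relation: b * f x₀ = x₀' * f b for b, x₀ ∈ I
    have hrel : ∀ b : I, (b : R) * f ⟨x, hx⟩ = x * f b := by
      intro b
      rw [← smul_eq_mul, ← smul_eq_mul, ← map_smul, ← map_smul]
      congr 1
      ext
      simp [mul_comm]
    -- `f x ∈ (x)` because `y * f x = x * f y` and `y` is regular mod `x`.
    have hfx : f ⟨x, hx⟩ ∈ (x • ⊤ : Submodule R R) := by
      have h1 : y • (Submodule.Quotient.mk (f ⟨x, hx⟩) : QuotSMulTop x R) = 0 := by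
        rw [← Submodule.Quotient.mk_smul, smul_eq_mul, hrel ⟨y, hy⟩,
          Submodule.Quotient.mk_eq_zero, ← smul_eq_mul]
        exact Submodule.smul_mem_pointwise_smul _ _ _ trivial
      have h0 : (Submodule.Quotient.mk (f ⟨x, hx⟩) : QuotSMulTop x R) = 0 := by
        apply hyreg
        show y • _ = y • (0 : QuotSMulTop x R)
        rw [h1, smul_zero]
      rwa [Submodule.Quotient.mk_eq_zero] at h0
    obtain ⟨c, -, hc⟩ := Set.mem_smul_set.mp hfx
    -- conclude `f a = c * a ∈ I`
    have hxa : x • ((a : R) * c) = x • f a := by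
      have h2 := hrel a
      rw [← hc] at h2
      simp only [smul_eq_mul] at h2 ⊢
      rw [← h2]; ring
    have := hxreg hxa
    rw [← this]
    exact I.mul_mem_right c a.2
  · have : LinearMap.range I.subtype ≤ traceIdeal R I := le_iSup _ I.subtype
    rwa [Submodule.range_subtype] at this
end

section
/- Let (R, m) be a Noetherian local ring. Then the maximal ideal m fails to be a trace ideal (i.e., tr_R(m) = R) if and only if R is a discrete valuation ring. -/
/-!
If `tr(m) = R` then, `R` being local, a single functional `f : m → R` is already surjective.
Any functional on an ideal satisfies `f x * y = x * f y`, so `f` is injective and `m ≅ R`: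
`m = (t)` for a nonzerodivisor `t`. A prime not containing the non-nilpotent `t` satisfies
`P = m P`, hence vanishes by Nakayama; so `R` is a domain with principal nonzero maximal
ideal, i.e. a DVR. Conversely a uniformizer gives `m ≅ R`. Since `m ≤ tr(m)`, the only
alternative to `tr(m) = m` is `tr(m) = R`.
-/

open IsLocalRing Ideal
open scoped nonZeroDivisors

lemma Ideal.IsMaximal.ne_iff_eq_top_of_le {R : Type*} [CommRing R] {I J : Ideal R}
    (hI : I.IsMaximal) (hIJ : I ≤ J) : J ≠ I ↔ J = ⊤ :=
  ⟨fun hne => by_contra fun htop => hne (hI.eq_of_le htop hIJ).symm,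
    fun htop heq => hI.ne_top (heq ▸ htop)⟩

section traceIdeal

variable {R : Type*} [CommRing R] {M : Type*} [AddCommGroup M] [Module R M]

lemma LinearMap.range_le_traceIdeal (f : M →ₗ[R] R) : LinearMap.range f ≤ traceIdeal R M :=
  le_iSup (fun g : M →ₗ[R] R => LinearMap.range g) f

lemma Ideal.le_traceIdeal (I : Ideal R) : I ≤ traceIdeal R I := by
  simpa using I.subtype.range_le_traceIdeal

lemma IsLocalRing.traceIdeal_eq_top_iff [IsLocalRing R] :
    traceIdeal R M = ⊤ ↔ ∃ f : M →ₗ[R] R, Function.Surjective f := by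
  refine ⟨fun h => ?_, fun ⟨f, hf⟩ => top_le_iff.mp ?_⟩
  · by_contra! hf
    have : traceIdeal R M ≤ maximalIdeal R :=
      iSup_le fun f => le_maximalIdeal (LinearMap.range_eq_top.not.mpr (hf f))
    exact (maximalIdeal.isMaximal R).ne_top (top_le_iff.mp (h ▸ this))
  · exact LinearMap.range_eq_top.mpr hf ▸ f.range_le_traceIdeal

end traceIdeal

namespace Ideal

variable {R : Type*} [CommRing R] {I : Ideal R}

lemma apply_mul_eq_mul_apply (f : I →ₗ[R] R) (x y : I) : f x * y = x * f y := by
  have hswap : (y : R) • x = (x : R) • y := Subtype.ext (mul_comm _ _)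
  simpa [mul_comm] using congrArg f hswap

lemma linearMap_injective_of_surjective {f : I →ₗ[R] R} (hf : Function.Surjective f) :
    Function.Injective f := by
  obtain ⟨x, hx⟩ := hf 1
  refine (injective_iff_map_eq_zero f).mpr fun z hz => Subtype.ext ?_
  simpa [hx, hz] using apply_mul_eq_mul_apply f x z

lemma eq_span_singleton_of_linearEquiv (e : I ≃ₗ[R] R) : I = span {((e.symm 1 : I) : R)} := by
  refine le_antisymm (fun z hz => mem_span_singleton'.mpr ⟨e ⟨z, hz⟩, ?_⟩) ?_
  · have := congrArg Subtype.val (e.symm_apply_apply ⟨z, hz⟩)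
    rw [← mul_one (e ⟨z, hz⟩), ← smul_eq_mul, map_smul] at this
    simpa using this
  · exact span_le.mpr (Set.singleton_subset_iff.mpr (e.symm 1).2)

lemma mem_nonZeroDivisors_of_linearEquiv (e : I ≃ₗ[R] R) : ((e.symm 1 : I) : R) ∈ R⁰ := by
  refine mem_nonZeroDivisors_iff_right.mpr fun a ha => ?_
  have : a • e.symm 1 = 0 := Subtype.ext (by simpa using ha)
  simpa using congrArg e this

end Ideal

namespace IsLocalRing

variable {R : Type*} [CommRing R] [IsLocalRing R]

lemma traceIdeal_eq_top_iff_nonempty_linearEquiv {I : Ideal R} :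
    traceIdeal R I = ⊤ ↔ Nonempty (I ≃ₗ[R] R) := by
  refine traceIdeal_eq_top_iff.trans ⟨fun ⟨f, hf⟩ => ?_, fun ⟨e⟩ => ⟨e, e.surjective⟩⟩
  exact ⟨LinearEquiv.ofBijective f ⟨linearMap_injective_of_surjective hf, hf⟩⟩

lemma isDomain_of_maximalIdeal_eq_span [IsNoetherianRing R] {t : R} (ht : t ∈ R⁰)
    (hm : maximalIdeal R = span {t}) : IsDomain R := by
  have hnil : ¬IsNilpotent t := fun ⟨n, hn⟩ => nonZeroDivisors.ne_zero (pow_mem ht n) hn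
  obtain ⟨P, hP, htP⟩ : ∃ P : Ideal R, P.IsPrime ∧ t ∉ P := by
    simpa [nilpotent_iff_mem_prime] using hnil
  have hPm : P ≤ maximalIdeal R • P := fun x hx => by
    obtain ⟨y, rfl⟩ := mem_span_singleton'.mp (hm ▸ le_maximalIdeal hP.ne_top hx)
    have hy : y ∈ P := (hP.mem_or_mem hx).resolve_right htP
    have ht_mem : t ∈ maximalIdeal R := hm ▸ mem_span_singleton_self t
    simpa [mul_comm] using Submodule.smul_mem_smul ht_mem hy
  have hP0 : P = ⊥ := Submodule.eq_bot_of_le_smul_of_le_jacobson_bot _ P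
    (IsNoetherian.noetherian P) hPm (maximalIdeal_le_jacobson ⊥)
  have : (⊥ : Ideal R).IsPrime := hP0 ▸ hP
  exact IsDomain.of_bot_isPrime R

lemma isDiscreteValuationRing_of_maximalIdeal_linearEquiv [IsNoetherianRing R]
    (e : maximalIdeal R ≃ₗ[R] R) : ∃ _ : IsDomain R, IsDiscreteValuationRing R := by
  have hm := eq_span_singleton_of_linearEquiv e
  have ht := mem_nonZeroDivisors_of_linearEquiv e
  have := isDomain_of_maximalIdeal_eq_span ht hm
  have hnf : ¬IsField R := fun hf => nonZeroDivisors.ne_zero ht <|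
    span_singleton_eq_bot.mp (hm ▸ isField_iff_maximalIdeal_eq.mp hf)
  have hprinc : (maximalIdeal R).IsPrincipal := ⟨⟨_, hm⟩⟩
  exact ⟨this, ((IsDiscreteValuationRing.TFAE R hnf).out 0 4).mpr hprinc⟩

end IsLocalRing

lemma IsDiscreteValuationRing.nonempty_maximalIdeal_linearEquiv (R : Type*) [CommRing R]
    [IsDomain R] [IsDiscreteValuationRing R] :
    Nonempty (IsLocalRing.maximalIdeal R ≃ₗ[R] R) := by
  obtain ⟨ϖ, hϖ⟩ := IsDiscreteValuationRing.exists_irreducible R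
  exact ⟨(LinearEquiv.ofEq _ _ ((irreducible_iff_uniformizer ϖ).mp hϖ)).trans
    (LinearEquiv.toSpanNonzeroSingleton R R ϖ hϖ.ne_zero).symm⟩

/-- For a Noetherian local ring `(R, m)`, the maximal ideal `m` fails to be a trace ideal
(equivalently, `tr_R(m) = R`) if and only if `R` is a discrete valuation ring. -/
theorem maximalIdeal_not_traceIdeal_iff_dvr (R : Type*) [CommRing R] [IsNoetherianRing R]
    [IsLocalRing R] :
    (traceIdeal R (IsLocalRing.maximalIdeal R) ≠ IsLocalRing.maximalIdeal R ↔
      traceIdeal R (IsLocalRing.maximalIdeal R) = ⊤) ∧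
    (traceIdeal R (IsLocalRing.maximalIdeal R) ≠ IsLocalRing.maximalIdeal R ↔
      ∃ _h : IsDomain R, IsDiscreteValuationRing R) := by
  have hne_iff_top := (maximalIdeal.isMaximal R).ne_iff_eq_top_of_le (le_traceIdeal _)
  have htop_iff_dvr : traceIdeal R (maximalIdeal R) = ⊤ ↔
      ∃ _ : IsDomain R, IsDiscreteValuationRing R := by
    rw [traceIdeal_eq_top_iff_nonempty_linearEquiv]
    exact ⟨fun ⟨e⟩ => isDiscreteValuationRing_of_maximalIdeal_linearEquiv e,
      fun ⟨_, _⟩ => IsDiscreteValuationRing.nonempty_maximalIdeal_linearEquiv R⟩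
  exact ⟨hne_iff_top, hne_iff_top.trans htop_iff_dvr⟩
end

section
/- Let R be a Noetherian ring, I a regular ideal of R (containing a non-zerodivisor), and B an intermediate ring between R and the integral closure R̄. If IB is a trace ideal of B and IB ∩ R = I, then I is a regular trace ideal of R. -/
set_option synthInstance.maxHeartbeats 800000
set_option maxHeartbeats 1600000

/-- Let `R` be a Noetherian ring, `I` a regular ideal of `R`, and `B` an intermediate ring
between `R` and its integral closure `R̄` in the total ring of fractions. If `IB` is a
trace ideal of `B` and `IB ∩ R = I`, then `I` is a regular trace ideal of `R`. -/
theorem traceIdeal_of_extension (R : Type*) [CommRing R] [IsNoetherianRing R]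
    (I : Ideal R) (hreg : ∃ a ∈ I, a ∈ nonZeroDivisors R)
    (B : Subalgebra R (FractionRing R)) (hB : B ≤ integralClosure R (FractionRing R))
    (htr : traceIdeal B (I.map (algebraMap R B)) = I.map (algebraMap R B))
    (hcap : (I.map (algebraMap R B)).comap (algebraMap R B) = I) :
    (∃ a ∈ I, a ∈ nonZeroDivisors R) ∧ traceIdeal R I = I := by
  refine ⟨hreg, le_antisymm ?_ ?_⟩
  · -- traceIdeal R I ≤ I
    obtain ⟨a, haI, hareg⟩ := hreg
    set Q := FractionRing R
    have hu : IsUnit (algebraMap R Q a) :=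
      IsLocalization.map_units Q (⟨a, hareg⟩ : nonZeroDivisors R)
    refine iSup_le fun f => ?_
    set q : Q := (↑hu.unit⁻¹ : Q) * algebraMap R Q (f ⟨a, haI⟩) with hq
    -- key identity
    have key : ∀ x (hx : x ∈ I), q * algebraMap R Q x = algebraMap R Q (f ⟨x, hx⟩) := by
      intro x hx
      have h1 : a * f ⟨x, hx⟩ = x * f ⟨a, haI⟩ := by
        have e1 : (a • (⟨x, hx⟩ : I)) = (x • (⟨a, haI⟩ : I)) := by
          ext; simp [mul_comm]
        have h2 := congrArg f e1
        rw [map_smul, map_smul, smul_eq_mul, smul_eq_mul] at h2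
        exact h2
      apply hu.mul_left_cancel
      calc algebraMap R Q a * (q * algebraMap R Q x)
          = (↑hu.unit * ↑hu.unit⁻¹) * (algebraMap R Q (f ⟨a, haI⟩) * algebraMap R Q x) := by
            rw [hq, hu.unit_spec]; ring
        _ = algebraMap R Q (f ⟨a, haI⟩ * x) := by
            rw [Units.mul_inv, one_mul, map_mul]
        _ = algebraMap R Q a * algebraMap R Q (f ⟨x, hx⟩) := by
            rw [← map_mul, mul_comm (f ⟨a, haI⟩) x, ← h1]
    set J := I.map (algebraMap R B) with hJ
    have hqB : ∀ y : B, y ∈ J → q * (y : Q) ∈ B := by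
      intro y hy
      have hy' : y ∈ Ideal.span ((algebraMap R B) '' I) := hy
      refine Submodule.span_induction ?_ ?_ ?_ ?_ hy'
      · rintro _ ⟨i, hi, rfl⟩
        have : ((algebraMap R B i : B) : Q) = algebraMap R Q i := rfl
        rw [this, key i hi]
        exact B.algebraMap_mem _
      · simp only [ZeroMemClass.coe_zero, mul_zero]
        exact B.zero_mem
      · intro y z _ _ hy hz
        push_cast
        rw [mul_add]; exact B.add_mem hy hz
      · intro b y _ hy
        have : ((b • y : B) : Q) = (b : Q) * (y : Q) := rfl
        rw [this, mul_left_comm]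
        exact B.mul_mem b.2 hy
    let g : J →ₗ[B] B :=
      { toFun := fun y => ⟨q * ((y : B) : Q), hqB y y.2⟩
        map_add' := by intro y z; ext; push_cast; ring
        map_smul' := by
          intro b y
          ext
          simp only [RingHom.id_apply, smul_eq_mul, MulMemClass.coe_mul, SetLike.val_smul]
          ring }
    have hrange : LinearMap.range g ≤ J :=
      (le_iSup (fun f : ↥J →ₗ[B] B => LinearMap.range f) g).trans htr.le
    rintro r ⟨⟨x, hx⟩, rfl⟩
    have hmem : algebraMap R B x ∈ J := Ideal.mem_map_of_mem _ hx
    have : g ⟨algebraMap R B x, hmem⟩ ∈ J := hrange ⟨_, rfl⟩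
    have heq : g ⟨algebraMap R B x, hmem⟩ = algebraMap R B (f ⟨x, hx⟩) := by
      ext
      show q * ((algebraMap R B x : B) : Q) = _
      have h1 : ((algebraMap R B x : B) : Q) = algebraMap R Q x := rfl
      rw [h1, key x hx]; rfl
    rw [heq] at this
    have h3 : f ⟨x, hx⟩ ∈ J.comap (algebraMap R B) := this
    rwa [hcap] at h3
  · -- I ≤ traceIdeal R I
    have : LinearMap.range (Submodule.subtype I) ≤ traceIdeal R I :=
      le_iSup (fun f : I →ₗ[R] R => LinearMap.range f) _
    simpa using this
end

section
/- In a Noetherian local ring of Krull dimension at least 3, for any prime ideal q of height 3 there exist infinitely many prime ideals p ⊆ q with height p = 2. -/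
/-!
Pick a chain `p₁ < p₂ < q` with `height p₁ = 1`; every prime strictly between `p₁` and `q` then has
height `2`, so it suffices that there are infinitely many of them. If there were only finitely
many, prime avoidance would give `x ∈ q` lying in none of them nor in `p₁`. A prime `r ≤ q` minimal
over `p₁ + (x)` then lies strictly above `p₁`, so `r = q`. But then `q / p₁` is minimal over a
principal ideal of `R / p₁`, hence has height at most `1` by Krull's principal ideal theorem,
contradicting the chain `0 < p₂ / p₁ < q / p₁`.
-/

lemma Order.height_eq_of_lt_of_lt {α : Type*} [Preorder α] {a b c : α} (hab : a < b) (hbc : b < c)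
    {n : ℕ} (ha : height a = n) (hc : height c = n + 2) : height b = n + 1 := by
  have hlow := height_add_one_le hab
  have hhigh := height_add_one_le hbc
  rw [ha] at hlow
  rw [hc] at hhigh
  obtain ⟨m, hm⟩ := ENat.ne_top_iff_exists.mp
    (show height b ≠ ⊤ from fun h ↦ by simp [h] at hhigh)
  rw [← hm] at hlow hhigh ⊢
  norm_cast at hlow hhigh ⊢
  omega

namespace PrimeSpectrum

variable {R : Type*} [CommRing R] [IsNoetherianRing R]

lemma Ioo_eq_empty_of_mem_minimalPrimes {p q : PrimeSpectrum R} {x : R}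
    (hq : q.asIdeal ∈ (p.asIdeal ⊔ Ideal.span {x}).minimalPrimes) : Set.Ioo p q = ∅ := by
  let e := p.asIdeal.primeSpectrumQuotientOrderIsoZeroLocus.symm
  have hp : p ∈ zeroLocus (p.asIdeal : Set R) := Set.Subset.rfl
  have hpq : q ∈ zeroLocus (p.asIdeal : Set R) := le_sup_left.trans hq.1.2
  have hheight : Order.height (e ⟨q, hpq⟩) ≤ 1 := by
    rw [← height_eq_orderHeight]
    exact Ideal.map_height_le_one_of_mem_minimalPrimes hq
  refine Set.eq_empty_of_forall_notMem fun r ⟨hpr, hrq⟩ ↦ hheight.not_gt ?_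
  have hr : r ∈ zeroLocus (p.asIdeal : Set R) := hpr.le
  exact Order.one_lt_height_iff.mpr ⟨e ⟨r, hr⟩, e ⟨p, hp⟩,
    e.strictMono (show (⟨p, hp⟩ : zeroLocus _) < ⟨r, hr⟩ from hpr),
    e.strictMono (show (⟨r, hr⟩ : zeroLocus _) < ⟨q, hpq⟩ from hrq)⟩

theorem infinite_Ioo_of_nonempty {p q : PrimeSpectrum R} (h : (Set.Ioo p q).Nonempty) :
    (Set.Ioo p q).Infinite := by
  classical
  intro hfin
  set F := insert p hfin.toFinset
  have hF : ∀ i ∈ F, i < q := by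
    simp only [F, Finset.mem_insert, Set.Finite.mem_toFinset]
    rintro i (rfl | hi)
    exacts [h.some_mem.1.trans h.some_mem.2, hi.2]
  obtain ⟨x, hxq, hxF⟩ : ∃ x ∈ q.asIdeal, ∀ i ∈ F, x ∉ i.asIdeal := by
    have hnot : ¬ (q.asIdeal : Set R) ⊆ ⋃ i ∈ (F : Set (PrimeSpectrum R)), i.asIdeal := by
      rw [Ideal.subset_union_prime p p fun i _ _ _ ↦ i.isPrime]
      rintro ⟨i, hi, hqi⟩
      exact (hF i hi).not_ge hqi
    obtain ⟨x, hxq, hx⟩ := Set.not_subset.mp hnot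
    exact ⟨x, hxq, fun i hi hxi ↦ hx (Set.mem_biUnion hi hxi)⟩
  have hle : p.asIdeal ⊔ Ideal.span {x} ≤ q.asIdeal :=
    sup_le (hF p (Finset.mem_insert_self _ _)).le (Ideal.span_singleton_le_iff_mem _ |>.mpr hxq)
  obtain ⟨r, hr, hrq⟩ := Ideal.exists_minimalPrimes_le hle
  let r' : PrimeSpectrum R := ⟨r, hr.1.1⟩
  have hxr : x ∈ r := hr.1.2 (Ideal.mem_sup_right (Ideal.mem_span_singleton_self x))
  have hpr : p < r' := lt_of_le_of_ne (le_sup_left.trans hr.1.2)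
    fun hpr ↦ hxF p (Finset.mem_insert_self _ _) (hpr ▸ hxr)
  rcases (show r' ≤ q from hrq).lt_or_eq with hrq | rfl
  · exact hxF r' (Finset.mem_insert_of_mem (hfin.mem_toFinset.mpr ⟨hpr, hrq⟩)) hxr
  · exact h.ne_empty (Ioo_eq_empty_of_mem_minimalPrimes hr)

end PrimeSpectrum

theorem infinitely_many_height_two_primes_general (R : Type*) [CommRing R] [IsNoetherianRing R]
    (q : PrimeSpectrum R) (hq : Order.height q = 3) :
    {p : PrimeSpectrum R | p.asIdeal ≤ q.asIdeal ∧ Order.height p = 2}.Infinite := by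
  obtain ⟨p₂, hp₂q, hp₂⟩ := (Order.coe_lt_height_iff (x := q) (n := 2) (by rw [hq]; decide)).mp
    (by rw [hq]; decide)
  obtain ⟨p₁, hp₁p₂, hp₁⟩ := (Order.coe_lt_height_iff (x := p₂) (n := 1) (by rw [hp₂]; decide)).mp
    (by rw [hp₂]; decide)
  refine (PrimeSpectrum.infinite_Ioo_of_nonempty ⟨p₂, hp₁p₂, hp₂q⟩).mono ?_
  rintro r ⟨hp₁r, hrq⟩
  exact ⟨hrq.le, Order.height_eq_of_lt_of_lt hp₁r hrq hp₁ (by rw [hq]; rfl)⟩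

/-- In a Noetherian local ring of Krull dimension at least `3`, below any prime ideal `q`
of height `3` there are infinitely many prime ideals of height `2`. -/
theorem infinitely_many_height_two_primes (R : Type*) [CommRing R] [IsNoetherianRing R]
    [IsLocalRing R] (hdim : 3 ≤ ringKrullDim R)
    (q : PrimeSpectrum R) (hq : Order.height q = 3) :
    {p : PrimeSpectrum R | p.asIdeal ≤ q.asIdeal ∧ Order.height p = 2}.Infinite :=
  infinitely_many_height_two_primes_general R q hq
end

section
/- Let (R, m) be a one-dimensional Cohen–Macaulay local ring having minimal multiplicity, with m² = am for a non-zerodivisor a ∈ m, and suppose R is not a discrete valuation ring. Set B = m : m (an R-subalgebra of the total quotient ring). Then the map I ↦ (1/a)I gives a bijection from the set of trace ideals of R other than R itself onto the set of trace ideals of B. -/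
set_option synthInstance.maxHeartbeats 800000

/-- The ring `B = m : m ⊆ Q(R)`, the stabilizer of the maximal ideal in the total ring
of fractions. -/
def stabilizerAlgebra (R : Type*) [CommRing R] [IsLocalRing R] :
    Subalgebra R (FractionRing R) where
  carrier := {α | ∀ x ∈ IsLocalRing.maximalIdeal R, ∃ y ∈ IsLocalRing.maximalIdeal R,
    α * algebraMap R (FractionRing R) x = algebraMap R (FractionRing R) y}
  mul_mem' := by
    intro a b ha hb x hx
    obtain ⟨y, hy, hbe⟩ := hb x hx
    obtain ⟨z, hz, hae⟩ := ha y hy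
    exact ⟨z, hz, by rw [mul_assoc, hbe, hae]⟩
  one_mem' := fun x hx => ⟨x, hx, by rw [one_mul]⟩
  add_mem' := by
    intro a b ha hb x hx
    obtain ⟨y, hy, hae⟩ := ha x hx
    obtain ⟨z, hz, hbe⟩ := hb x hx
    exact ⟨y + z, add_mem hy hz, by rw [add_mul, hae, hbe, map_add]⟩
  zero_mem' := fun x hx => ⟨0, zero_mem _, by rw [zero_mul, map_zero]⟩
  algebraMap_mem' := fun r x hx =>
    ⟨r * x, Ideal.mul_mem_left _ r hx, by rw [map_mul]⟩

/-!
Write `m` for the maximal ideal. Since `a ∈ m` and `m² = a m`, multiplication by `a` is an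
`R`-linear isomorphism `B ≅ m`, under which an ideal `J` of `B` corresponds to `a J ⊆ m`.

A trace ideal `I ⊆ m` of `R` is stable under each `β ∈ B` (multiplication by `β` is an
`R`-linear map `I → R`), so `I / a` is an ideal of `B`; a `B`-linear map `I / a → B` gives,
after multiplication by `a`, an `R`-linear map `I → R`, hence `I / a` is a trace ideal.
Conversely, as `B ⊆ Q(R)`, every `R`-linear map between `B`-modules is `B`-linear, so an
`R`-linear map `f : a J → R` with values in `m` comes from a `B`-linear map `J → B` and
preserves `a J`. If `f` takes a unit value, the same argument applied to `x f`, `x ∈ m`, gives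
`a J = m`, which is then principal and generated by a non-zerodivisor: `R` would be a DVR.
-/

open scoped nonZeroDivisors

open IsLocalRing

theorem traceIdeal_eq_self_iff {S : Type*} [CommRing S] (I : Ideal S) :
    traceIdeal S I = I ↔ ∀ (f : I →ₗ[S] S) (x : I), f x ∈ I := by
  refine ⟨fun h f x => h.le ?_, fun h => le_antisymm (iSup_le fun f => ?_) fun x hx => ?_⟩
  · exact le_iSup (fun g : I →ₗ[S] S => LinearMap.range g) f ⟨x, rfl⟩
  · rintro _ ⟨x, rfl⟩
    exact h f x
  · exact le_iSup (fun g : I →ₗ[S] S => LinearMap.range g) I.subtype ⟨⟨x, hx⟩, rfl⟩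

namespace Ideal

variable {S : Type*} [CommRing S] {I : Ideal S} (f : I →ₗ[S] S) {j : I}

theorem eq_span_singleton_of_isUnit_apply (hj : IsUnit (f j)) : I = span {(j : S)} := by
  refine le_antisymm (fun s hs => mem_span_singleton'.2 ⟨f ⟨s, hs⟩ * ↑hj.unit⁻¹, ?_⟩)
    (span_singleton_le_iff_mem I |>.2 j.2)
  have hsym : s * f j = j * f ⟨s, hs⟩ := by
    rw [← smul_eq_mul, ← map_smul, ← smul_eq_mul, ← map_smul]
    congr 1
    exact Subtype.ext (mul_comm _ _)
  calc f ⟨s, hs⟩ * ↑hj.unit⁻¹ * j = j * f ⟨s, hs⟩ * ↑hj.unit⁻¹ := by ring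
    _ = s := by rw [← hsym, mul_assoc, hj.mul_val_inv, mul_one]

theorem mem_nonZeroDivisors_of_isUnit_apply (hj : IsUnit (f j)) : (j : S) ∈ S⁰ := by
  refine mem_nonZeroDivisors_iff_right.2 fun z hz => ?_
  have : z • j = 0 := Subtype.ext hz
  rw [← hj.mul_left_eq_zero, ← smul_eq_mul, ← map_smul, this, map_zero]

end Ideal

namespace IsLocalRing

variable {R : Type*} [CommRing R] [IsLocalRing R] {r : R}

theorem exists_eq_pow_mul_unit_of_notMem_span_pow (hr : maximalIdeal R = Ideal.span {r}) :
    ∀ (n : ℕ) {z : R}, z ∉ Ideal.span {r ^ n} → ∃ (k : ℕ) (u : Rˣ), z = r ^ k * u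
  | 0, z, hz => by simp at hz
  | n + 1, z, hz => by
    by_cases hzu : IsUnit z
    · exact ⟨0, hzu.unit, by simp⟩
    obtain ⟨w, rfl⟩ : ∃ w, w * r = z := by
      rw [← Ideal.mem_span_singleton', ← hr]
      exact hzu
    have hw : w ∉ Ideal.span {r ^ n} := fun hw => hz <| by
      obtain ⟨c, rfl⟩ := Ideal.mem_span_singleton'.1 hw
      exact Ideal.mem_span_singleton'.2 ⟨c, by ring⟩
    obtain ⟨k, u, rfl⟩ := exists_eq_pow_mul_unit_of_notMem_span_pow hr n hw
    exact ⟨k + 1, u, by ring⟩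

variable [IsNoetherianRing R]

theorem exists_eq_pow_mul_unit (hr : maximalIdeal R = Ideal.span {r}) {z : R} (hz : z ≠ 0) :
    ∃ (k : ℕ) (u : Rˣ), z = r ^ k * u := by
  obtain ⟨n, hn⟩ : ∃ n, z ∉ maximalIdeal R ^ n := by
    by_contra! h
    have hbot := Ideal.iInf_pow_eq_bot_of_isLocalRing _ (maximalIdeal.isMaximal R).ne_top
    exact hz <| by simpa [hbot] using (Submodule.mem_iInf _).2 h
  rw [hr, Ideal.span_singleton_pow] at hn
  exact exists_eq_pow_mul_unit_of_notMem_span_pow hr n hn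

theorem isDomain_of_maximalIdeal_eq_span_s17 (hr0 : r ∈ R⁰) (hr : maximalIdeal R = Ideal.span {r}) :
    IsDomain R := by
  have : NoZeroDivisors R := ⟨fun {x y} hxy => by
    by_contra! h
    obtain ⟨k, u, rfl⟩ := exists_eq_pow_mul_unit hr h.1
    obtain ⟨l, v, rfl⟩ := exists_eq_pow_mul_unit hr h.2
    have : (u * v : R) * r ^ (k + l) = 0 := by rw [← hxy]; ring
    exact (u * v).ne_zero (mem_nonZeroDivisors_iff_right.1 (pow_mem hr0 _) _ this)⟩
  exact NoZeroDivisors.to_isDomain R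

theorem isDiscreteValuationRing_of_maximalIdeal_eq_span (hr0 : r ∈ R⁰)
    (hr : maximalIdeal R = Ideal.span {r}) :
    ∃ _ : IsDomain R, IsDiscreteValuationRing R := by
  have := isDomain_of_maximalIdeal_eq_span_s17 hr0 hr
  have hnf : ¬IsField R := by
    rw [isField_iff_maximalIdeal_eq, hr, Ideal.span_singleton_eq_bot]
    exact nonZeroDivisors.ne_zero hr0
  have hprinc : (maximalIdeal R).IsPrincipal := ⟨r, hr⟩
  exact ⟨this, ((IsDiscreteValuationRing.TFAE R hnf).out 4 0).1 hprinc⟩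

end IsLocalRing

section Transport

variable {R B : Type*} [CommRing R] [CommRing B] [Algebra R B] {M : Ideal R} (e : M ≃ₗ[R] B)

def baseIdeal (J : Ideal B) : Ideal R :=
  (J.restrictScalars R).map (M.subtype ∘ₗ e.symm.toLinearMap)

variable {e}

theorem mem_baseIdeal {J : Ideal B} {r : R} :
    r ∈ baseIdeal e J ↔ ∃ β ∈ J, (e.symm β : R) = r :=
  Submodule.mem_map

theorem symm_mem_baseIdeal_iff {J : Ideal B} {β : B} :
    (e.symm β : R) ∈ baseIdeal e J ↔ β ∈ J :=
  ⟨fun h => by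
    obtain ⟨γ, hγ, hγβ⟩ := mem_baseIdeal.1 h
    rwa [← e.symm.injective (Subtype.ext hγβ)], fun h => mem_baseIdeal.2 ⟨β, h, rfl⟩⟩

theorem baseIdeal_le (J : Ideal B) : baseIdeal e J ≤ M := by
  rintro _ ⟨β, -, rfl⟩
  exact (e.symm β).2

theorem symm_mul_mem_of_traceIdeal_eq_self {I : Ideal R} (hI : traceIdeal R I = I) (hIM : I ≤ M)
    (γ : B) {β : B} (hβ : (e.symm β : R) ∈ I) : (e.symm (γ * β) : R) ∈ I := by
  let f : I →ₗ[R] R := M.subtype ∘ₗ e.symm.toLinearMap ∘ₗ LinearMap.mulLeft R γ ∘ₗ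
    e.toLinearMap ∘ₗ Submodule.inclusion hIM
  have hβ' : Submodule.inclusion hIM ⟨_, hβ⟩ = e.symm β := rfl
  simpa [f, hβ'] using (traceIdeal_eq_self_iff I).1 hI f ⟨_, hβ⟩

variable (e) in
def algebraIdeal (I : Ideal R) (hI : traceIdeal R I = I) (hIM : I ≤ M) : Ideal B where
  carrier := {β | (e.symm β : R) ∈ I}
  add_mem' {β γ} hβ hγ := by
    simpa only [Set.mem_ofPred_eq, map_add, Submodule.coe_add] using add_mem hβ hγ
  zero_mem' := by simp
  smul_mem' γ _ hβ := symm_mul_mem_of_traceIdeal_eq_self hI hIM γ hβ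

theorem traceIdeal_algebraIdeal {I : Ideal R} (hI : traceIdeal R I = I) (hIM : I ≤ M) :
    traceIdeal B (algebraIdeal e I hI hIM) = algebraIdeal e I hI hIM := by
  set J := algebraIdeal e I hI hIM
  refine (traceIdeal_eq_self_iff J).2 fun g β => ?_
  let toJ : I →ₗ[R] J := LinearMap.codRestrict (J.restrictScalars R)
    (e.toLinearMap ∘ₗ Submodule.inclusion hIM) fun x => by simp [J, algebraIdeal]
  let f : I →ₗ[R] R := M.subtype ∘ₗ e.symm.toLinearMap ∘ₗ g.restrictScalars R ∘ₗ toJ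
  have hβ : toJ ⟨_, β.2⟩ = β := Subtype.ext (e.apply_symm_apply β)
  have hfβ := (traceIdeal_eq_self_iff I).1 hI f ⟨_, β.2⟩
  exact (by simpa [f, hβ] using hfβ : (e.symm (g β) : R) ∈ I)

end Transport

section SubalgebraFractionRing

variable {R : Type*} [CommRing R] {B : Subalgebra R (FractionRing R)}

theorem LinearMap.map_smul_of_subalgebra_fractionRing {N : Type*} [AddCommGroup N] [Module B N]
    [Module R N] [IsScalarTower R B N] (g : N →ₗ[R] B) (γ : B) (x : N) :
    g (γ • x) = γ * g x := by
  obtain ⟨⟨y, s⟩, hys⟩ := IsLocalization.surj R⁰ (γ : FractionRing R)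
  have hsγ : (s : R) • γ = algebraMap R B y :=
    Subtype.ext (by simp [Algebra.smul_def, ← hys, mul_comm])
  have hs : IsUnit (algebraMap R (FractionRing R) s) := IsLocalization.map_units _ s
  apply Subtype.ext
  apply hs.mul_right_injective
  calc algebraMap R (FractionRing R) s * ↑(g (γ • x)) = ↑(g (((s : R) • γ) • x)) := by
        rw [smul_assoc, map_smul g (s : R)]; simp [Algebra.smul_def]
    _ = ↑(g (y • x)) := by rw [hsγ, algebraMap_smul]
    _ = algebraMap R (FractionRing R) s * ↑(γ * g x) := by
        rw [map_smul g y]; simp [Algebra.smul_def, ← hys]; ring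

variable {M : Ideal R} {e : M ≃ₗ[R] B}

theorem mul_apply_mem_baseIdeal {J : Ideal B} (hJ : traceIdeal B J = J)
    (f : baseIdeal e J →ₗ[R] R) {c : R} (hc : ∀ x, c * f x ∈ M) (x : baseIdeal e J) :
    c * f x ∈ baseIdeal e J := by
  let toBase : J →ₗ[R] baseIdeal e J := LinearMap.codRestrict _
    (M.subtype ∘ₗ e.symm.toLinearMap ∘ₗ J.subtype.restrictScalars R) fun β =>
      symm_mem_baseIdeal_iff.2 β.2
  let g : J →ₗ[R] B :=
    e.toLinearMap ∘ₗ LinearMap.codRestrict M (c • f ∘ₗ toBase) fun β => hc _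
  let gB : J →ₗ[B] B := { g with
    map_smul' := fun γ β => g.map_smul_of_subalgebra_fractionRing γ β }
  obtain ⟨x, hx⟩ := x
  obtain ⟨β, hβ, rfl⟩ := mem_baseIdeal.1 hx
  have hβ' : toBase ⟨β, hβ⟩ = ⟨_, hx⟩ := rfl
  have hg : (e.symm (gB ⟨β, hβ⟩) : R) = c * f ⟨_, hx⟩ := by simp [gB, g, hβ']
  exact hg ▸ symm_mem_baseIdeal_iff.2 ((traceIdeal_eq_self_iff J).1 hJ gB ⟨β, hβ⟩)

end SubalgebraFractionRing

section MinimalMultiplicity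

variable {R : Type*} [CommRing R] {a : R}

/-- `(1/a) I ⊆ Q(R)`, written without inverting `a`. -/
def divIdeal (a : R) (I : Ideal R) : Set (FractionRing R) :=
  {α | α * algebraMap R _ a ∈ algebraMap R _ '' (I : Set R)}

theorem mk'_mem_divIdeal_iff (hanzd : a ∈ R⁰) {I : Ideal R} {r : R} :
    IsLocalization.mk' (FractionRing R) r ⟨a, hanzd⟩ ∈ divIdeal a I ↔ r ∈ I := by
  refine ⟨fun ⟨i, hi, hir⟩ => ?_, fun hr => ⟨r, hr, (IsLocalization.mk'_spec ..).symm⟩⟩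
  rwa [← IsFractionRing.injective R (FractionRing R) (hir.trans (IsLocalization.mk'_spec _ _ _))]

theorem divIdeal_injective (hanzd : a ∈ R⁰) : Function.Injective (divIdeal a) := fun I I' h =>
  Ideal.ext fun r => by rw [← mk'_mem_divIdeal_iff hanzd, h, mk'_mem_divIdeal_iff hanzd]

variable [IsLocalRing R]

theorem mem_stabilizerAlgebra_iff (ha : a ∈ maximalIdeal R) (hanzd : a ∈ R⁰)
    (hmin : maximalIdeal R ^ 2 = Ideal.span {a} * maximalIdeal R) {α : FractionRing R} :
    α ∈ stabilizerAlgebra R ↔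
      ∃ x ∈ maximalIdeal R, α * algebraMap R _ a = algebraMap R _ x := by
  refine ⟨fun h => h a ha, fun ⟨x, hx, hαx⟩ y hy => ?_⟩
  have hxy : x * y ∈ maximalIdeal R ^ 2 := sq (maximalIdeal R) ▸ Ideal.mul_mem_mul hx hy
  obtain ⟨z, hz, hxy⟩ := Ideal.mem_span_singleton_mul.1 (hmin ▸ hxy)
  have hau : IsUnit (algebraMap R (FractionRing R) a) := IsLocalization.map_units _ ⟨a, hanzd⟩
  refine ⟨z, hz, hau.mul_left_injective ?_⟩
  calc α * algebraMap R _ y * algebraMap R _ a = algebraMap R _ (x * y) := by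
        rw [map_mul, ← hαx]; ring
    _ = algebraMap R _ z * algebraMap R _ a := by rw [← hxy, map_mul, mul_comm]

variable (ha : a ∈ maximalIdeal R) (hanzd : a ∈ R⁰)
  (hmin : maximalIdeal R ^ 2 = Ideal.span {a} * maximalIdeal R)

noncomputable def stabilizerAlgebraEquiv : maximalIdeal R ≃ₗ[R] stabilizerAlgebra R :=
  LinearEquiv.ofBijective
    { toFun (x : maximalIdeal R) := ⟨IsLocalization.mk' _ (x : R) ⟨a, hanzd⟩,
        (mem_stabilizerAlgebra_iff ha hanzd hmin).2 ⟨x, x.2, IsLocalization.mk'_spec _ _ _⟩⟩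
      map_add' x y := Subtype.ext <| IsLocalization.mk'_eq_iff_eq_mul.2 <| by
        simp only [AddMemClass.coe_add, add_mul, IsLocalization.mk'_spec_mk, map_add]
      map_smul' r x := Subtype.ext (IsLocalization.smul_mk' r (x : R) _).symm }
    ⟨fun x y hxy => Subtype.ext <| IsFractionRing.injective R (FractionRing R) <| by
      rw [← IsLocalization.mk'_spec (FractionRing R) (x : R) ⟨a, hanzd⟩,
        ← IsLocalization.mk'_spec (FractionRing R) (y : R) ⟨a, hanzd⟩]
      exact congrArg (· * algebraMap R _ a) (congrArg Subtype.val hxy),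
    fun β => by
      obtain ⟨x, hx, hβx⟩ := (mem_stabilizerAlgebra_iff ha hanzd hmin).1 β.2
      exact ⟨⟨x, hx⟩, Subtype.ext (IsLocalization.mk'_eq_iff_eq_mul.2 hβx.symm)⟩⟩

theorem stabilizerAlgebraEquiv_symm_spec (β : stabilizerAlgebra R) :
    algebraMap R (FractionRing R) ((stabilizerAlgebraEquiv ha hanzd hmin).symm β : R) =
      β * algebraMap R (FractionRing R) a := by
  conv_rhs => rw [← (stabilizerAlgebraEquiv ha hanzd hmin).apply_symm_apply β]
  exact (IsLocalization.mk'_spec _ _ _).symm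

theorem divIdeal_eq_image {I : Ideal R} (hIM : I ≤ maximalIdeal R) :
    divIdeal a I = Subtype.val ''
      {β | ((stabilizerAlgebraEquiv ha hanzd hmin).symm β : R) ∈ I} := by
  ext α
  refine ⟨fun ⟨i, hi, hiα⟩ => ?_, ?_⟩
  · have hα : α ∈ stabilizerAlgebra R :=
      (mem_stabilizerAlgebra_iff ha hanzd hmin).2 ⟨i, hIM hi, hiα.symm⟩
    refine ⟨⟨α, hα⟩, ?_, rfl⟩
    have hi' := (stabilizerAlgebraEquiv_symm_spec ha hanzd hmin ⟨α, hα⟩).trans hiα.symm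
    rwa [Set.mem_ofPred_eq, IsFractionRing.injective R (FractionRing R) hi']
  · rintro ⟨β, hβ, rfl⟩
    exact ⟨_, hβ, stabilizerAlgebraEquiv_symm_spec ha hanzd hmin β⟩

end MinimalMultiplicity

theorem traceIdeal_baseIdeal_eq_self {R : Type*} [CommRing R] [IsNoetherianRing R]
    [IsLocalRing R] (hnotdvr : ¬∃ _h : IsDomain R, IsDiscreteValuationRing R)
    {B : Subalgebra R (FractionRing R)}
    (e : maximalIdeal R ≃ₗ[R] B) {J : Ideal B} (hJ : traceIdeal B J = J) :
    traceIdeal R (baseIdeal e J) = baseIdeal e J := by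
  refine (traceIdeal_eq_self_iff _).2 fun f x => ?_
  by_cases hf : ∀ y, f y ∈ maximalIdeal R
  · simpa using mul_apply_mem_baseIdeal hJ f (c := 1) (by simpa using hf) x
  obtain ⟨j, hj⟩ := not_forall.1 hf
  have hju : IsUnit (f j) := of_not_not hj
  have hm : maximalIdeal R ≤ baseIdeal e J := fun y hy => by
    have hyj := mul_apply_mem_baseIdeal hJ f (c := y) (fun z => Ideal.mul_mem_right _ _ hy) j
    simpa [mul_assoc] using Ideal.mul_mem_right (↑hju.unit⁻¹ : R) _ hyj
  have hmj : maximalIdeal R = Ideal.span {(j : R)} :=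
    (le_antisymm (baseIdeal_le J) hm).symm.trans (Ideal.eq_span_singleton_of_isUnit_apply f hju)
  exact (hnotdvr <| isDiscreteValuationRing_of_maximalIdeal_eq_span
    (Ideal.mem_nonZeroDivisors_of_isUnit_apply f hju) hmj).elim

theorem traceIdeal_bijection_minimal_multiplicity_general (R : Type*) [CommRing R]
    [IsNoetherianRing R] [IsLocalRing R]
    (a : R) (ha : a ∈ IsLocalRing.maximalIdeal R) (hanzd : a ∈ nonZeroDivisors R)
    (hmin : (IsLocalRing.maximalIdeal R) ^ 2 = Ideal.span {a} * IsLocalRing.maximalIdeal R)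
    (hnotdvr : ¬∃ _h : IsDomain R, IsDiscreteValuationRing R) :
    Set.BijOn
      (fun I : Ideal R => {α : FractionRing R |
        α * algebraMap R (FractionRing R) a ∈ algebraMap R (FractionRing R) '' (I : Set R)})
      {I : Ideal R | traceIdeal R I = I ∧ I ≠ ⊤}
      {S : Set (FractionRing R) | ∃ J : Ideal (stabilizerAlgebra R),
        traceIdeal (stabilizerAlgebra R) J = J ∧
        S = Subtype.val '' (J : Set (stabilizerAlgebra R))} := by
  set e := stabilizerAlgebraEquiv ha hanzd hmin
  refine ⟨?_, fun I _ I' _ h => divIdeal_injective hanzd h, ?_⟩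
  · rintro I ⟨hI, hItop⟩
    have hIm := le_maximalIdeal hItop
    exact ⟨algebraIdeal e I hI hIm, traceIdeal_algebraIdeal hI hIm,
      divIdeal_eq_image ha hanzd hmin hIm⟩
  · rintro _ ⟨J, hJ, rfl⟩
    have hJm := baseIdeal_le (e := e) J
    refine ⟨baseIdeal e J, ⟨traceIdeal_baseIdeal_eq_self hnotdvr e hJ,
      ne_top_of_le_ne_top (maximalIdeal.isMaximal R).ne_top hJm⟩, ?_⟩
    change divIdeal a _ = _
    rw [divIdeal_eq_image ha hanzd hmin hJm]
    congr 1
    ext β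
    exact symm_mem_baseIdeal_iff

/-- Let `(R, m)` be a one-dimensional Cohen–Macaulay local ring of minimal multiplicity,
with `m² = am` for a non-zerodivisor `a ∈ m`, and suppose `R` is not a DVR. With
`B = m : m`, the assignment `I ↦ (1/a)I` is a bijection from the trace ideals of `R`
other than `R` onto the trace ideals of `B`. -/
theorem traceIdeal_bijection_minimal_multiplicity (R : Type*) [CommRing R]
    [IsNoetherianRing R] [IsLocalRing R]
    (hdim : ringKrullDim R = 1)
    (a : R) (ha : a ∈ IsLocalRing.maximalIdeal R) (hanzd : a ∈ nonZeroDivisors R)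
    (hmin : (IsLocalRing.maximalIdeal R) ^ 2 = Ideal.span {a} * IsLocalRing.maximalIdeal R)
    (hnotdvr : ¬∃ _h : IsDomain R, IsDiscreteValuationRing R) :
    Set.BijOn
      (fun I : Ideal R => {α : FractionRing R |
        α * algebraMap R (FractionRing R) a ∈ algebraMap R (FractionRing R) '' (I : Set R)})
      {I : Ideal R | traceIdeal R I = I ∧ I ≠ ⊤}
      {S : Set (FractionRing R) | ∃ J : Ideal (stabilizerAlgebra R),
        traceIdeal (stabilizerAlgebra R) J = J ∧
        S = Subtype.val '' (J : Set (stabilizerAlgebra R))} :=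
  traceIdeal_bijection_minimal_multiplicity_general R a ha hanzd hmin hnotdvr
end
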